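/- Let A be a symmetric positive semidefinite n×n real matrix, F̂ : ℝ → ℝ with F̂ = 𝔣̂² for 𝔣̂ ≥ 0. Set W(t) = cos(t√A)·F̂(√A)·e_s and u(t) = cos(t√A)·𝔣̂(√A)·e_s. If 𝔣 : ℝ → ℝ is even and satisfies ∫ 𝔣(t') cos(t'ω) dt' = 𝔣̂(ω) for all ω ≥ 0 (with suitable integrability), then W(t) = ∫ℝ 𝔣(t−t')·u(t') dt' for all t, i.e., W = 𝔣 ⋆ u componentwise. -/

import Mathlib

/-!
Diagonalising `A = Q diag(θⱼ) Qᵀ`, every matrix in sight is a matrix function of `A`, and the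
entries of `f(A)` depend linearly on the values `f(θⱼ)`; so integrating against the pulse in
time commutes with the functional calculus and the claim reduces to one scalar identity per
frequency `ω = √θⱼ`. For an even integrable `𝔣`, `cos((t - s)ω) = cos(tω)cos(sω) + sin(tω)sin(sω)`
and the sine part integrates to zero, so `(𝔣 ⋆ cos(·ω))(t) = 𝔣̂(ω) cos(tω)`; multiplying by
`𝔣̂(ω)` gives `F̂(ω) cos(tω)`.
-/

open Matrix
open MeasureTheory

/-- `f(A)` for a real symmetric matrix `A`, via the spectral decomposition
`A = Q diag(θⱼ) Qᵀ`, `f(A) = Q diag(f(θⱼ)) Qᵀ`. -/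
noncomputable def matFun {n : Type*} [Fintype n] [DecidableEq n] (A : Matrix n n ℝ)
    (hA : A.IsHermitian) (f : ℝ → ℝ) : Matrix n n ℝ :=
  (hA.eigenvectorUnitary : Matrix n n ℝ) * Matrix.diagonal (fun i => f (hA.eigenvalues i)) *
    star (hA.eigenvectorUnitary : Matrix n n ℝ)

/-- `cos(t·√A)` for a real symmetric (positive semidefinite) matrix `A`. -/
noncomputable def matCos {n : Type*} [Fintype n] [DecidableEq n] (A : Matrix n n ℝ)
    (hA : A.IsHermitian) (t : ℝ) : Matrix n n ℝ :=
  matFun A hA (fun θ => Real.cos (t * Real.sqrt θ))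

open Real

theorem MeasureTheory.Integrable.mul_cos_mul {f : ℝ → ℝ} (hf : Integrable f) (ω : ℝ) :
    Integrable (fun x => f x * cos (x * ω)) :=
  hf.mul_bdd (by fun_prop : Continuous fun x => cos (x * ω)).aestronglyMeasurable
    (ae_of_all _ fun x => by simpa using abs_cos_le_one (x * ω))

theorem MeasureTheory.Integrable.mul_sin_mul {f : ℝ → ℝ} (hf : Integrable f) (ω : ℝ) :
    Integrable (fun x => f x * sin (x * ω)) :=
  hf.mul_bdd (by fun_prop : Continuous fun x => sin (x * ω)).aestronglyMeasurable
    (ae_of_all _ fun x => by simpa using abs_sin_le_one (x * ω))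

theorem integral_mul_sin_mul_eq_zero_of_even {f : ℝ → ℝ} (hf_even : ∀ x, f (-x) = f x)
    (ω : ℝ) : ∫ x, f x * sin (x * ω) = 0 := by
  have h := integral_neg_eq_self (fun x => f x * sin (x * ω)) volume
  simp only [hf_even, neg_mul, sin_neg, mul_neg, integral_neg] at h
  linarith

theorem integral_comp_sub_mul_cos_of_even {f : ℝ → ℝ} (hf_even : ∀ x, f (-x) = f x)
    (hf : Integrable f) (ω t : ℝ) :
    ∫ x, f (t - x) * cos (x * ω) = (∫ x, f x * cos (x * ω)) * cos (t * ω) := by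
  calc ∫ x, f (t - x) * cos (x * ω) = ∫ x, f x * cos ((t - x) * ω) := by
        rw [← integral_sub_left_eq_self _ volume t]
        simp only [sub_sub_cancel]
    _ = ∫ x, cos (t * ω) * (f x * cos (x * ω)) + sin (t * ω) * (f x * sin (x * ω)) := by
        congr with x
        rw [sub_mul, cos_sub]
        ring
    _ = (∫ x, f x * cos (x * ω)) * cos (t * ω) := by
        rw [integral_add ((hf.mul_cos_mul ω).const_mul _) ((hf.mul_sin_mul ω).const_mul _),
          integral_const_mul, integral_const_mul, integral_mul_sin_mul_eq_zero_of_even hf_even,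
          mul_zero, add_zero, mul_comm]

section matFun

variable {n : Type*} [Fintype n] [DecidableEq n] (A : Matrix n n ℝ) (hA : A.IsHermitian)

theorem matFun_apply (f : ℝ → ℝ) (i k : n) :
    matFun A hA f i k = ∑ j, (hA.eigenvectorUnitary : Matrix n n ℝ) i j *
      f (hA.eigenvalues j) * (hA.eigenvectorUnitary : Matrix n n ℝ) k j := by
  simp only [matFun, mul_apply, star_apply, star_trivial, diagonal_apply, mul_ite, mul_zero,
    Finset.sum_ite_eq', Finset.mem_univ, if_true]

theorem matFun_mul (f g : ℝ → ℝ) :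
    matFun A hA f * matFun A hA g = matFun A hA (fun θ => f θ * g θ) := by
  have hQ : star (hA.eigenvectorUnitary : Matrix n n ℝ) *
      (hA.eigenvectorUnitary : Matrix n n ℝ) = 1 :=
    Unitary.star_mul_self_of_mem hA.eigenvectorUnitary.prop
  simp only [matFun, Matrix.mul_assoc]
  rw [← Matrix.mul_assoc (star _), hQ, Matrix.one_mul, ← Matrix.mul_assoc (diagonal _),
    diagonal_mul_diagonal]

theorem const_mul_matFun_apply (c : ℝ) (f : ℝ → ℝ) (i k : n) :
    c * matFun A hA f i k = matFun A hA (fun θ => c * f θ) i k := by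
  simp only [matFun_apply, Finset.mul_sum]
  congr with j
  ring

theorem integral_matFun_apply {α : Type*} [MeasurableSpace α] {μ : Measure α}
    (g : α → ℝ → ℝ) (hg : ∀ j, Integrable (fun x => g x (hA.eigenvalues j)) μ) (i k : n) :
    ∫ x, matFun A hA (g x) i k ∂μ = matFun A hA (fun θ => ∫ x, g x θ ∂μ) i k := by
  simp only [matFun_apply]
  rw [integral_finsetSum _ fun j _ => ((hg j).const_mul _).mul_const _]
  congr with j
  rw [integral_mul_const, integral_const_mul]

end matFun

theorem internal_wave_convolution_general {n : Type*} [Fintype n] [DecidableEq n]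
    (A : Matrix n n ℝ) (hA : A.IsHermitian)
    (Fhat fh : ℝ → ℝ) (hF : ∀ ω, Fhat ω = fh ω ^ 2)
    (s : n)
    (W u : ℝ → (n → ℝ))
    (hW : ∀ t, W t = (matCos A hA t).mulVec
      ((matFun A hA fun θ => Fhat (Real.sqrt θ)).mulVec (Pi.single s 1)))
    (hu : ∀ t, u t = (matCos A hA t).mulVec
      ((matFun A hA fun θ => fh (Real.sqrt θ)).mulVec (Pi.single s 1)))
    (𝔣 : ℝ → ℝ) (h𝔣even : ∀ t, 𝔣 (-t) = 𝔣 t) (h𝔣int : Integrable 𝔣)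
    (h𝔣hat : ∀ ω : ℝ, 0 ≤ ω → (∫ t', 𝔣 t' * Real.cos (t' * ω)) = fh ω) :
    ∀ (t : ℝ) (i : n), W t i = ∫ t', 𝔣 (t - t') * u t' i := by
  intro t i
  have hWt : W t i = matFun A hA (fun θ => cos (t * √θ) * Fhat √θ) i s := by
    rw [hW, mulVec_mulVec, matCos, matFun_mul, mulVec_single_one]
    rfl
  have hut : ∀ t', 𝔣 (t - t') * u t' i =
      matFun A hA (fun θ => 𝔣 (t - t') * (cos (t' * √θ) * fh √θ)) i s := by
    intro t'
    rw [hu, mulVec_mulVec, matCos, matFun_mul, mulVec_single_one, ← const_mul_matFun_apply]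
    rfl
  have hconv : ∀ θ, ∫ t', 𝔣 (t - t') * (cos (t' * √θ) * fh √θ) = cos (t * √θ) * Fhat √θ := by
    intro θ
    simp_rw [← mul_assoc]
    rw [integral_mul_const, integral_comp_sub_mul_cos_of_even h𝔣even h𝔣int,
      h𝔣hat _ (sqrt_nonneg θ), hF]
    ring
  simp_rw [hut]
  rw [integral_matFun_apply A hA _
      fun j => by simpa only [mul_assoc] using ((h𝔣int.comp_sub_left t).mul_cos_mul _).mul_const _,
    hWt]
  simp_rw [hconv]

/-- Finite-dimensional version of eq. (3.1): with `W(t) = cos(t√A)·F̂(√A)·e_s`,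
`u(t) = cos(t√A)·𝔣̂(√A)·e_s`, `F̂ = 𝔣̂²`, `𝔣̂ ≥ 0`, and `𝔣` an even integrable pulse with
`∫ 𝔣(t') cos(t'ω) dt' = 𝔣̂(ω)` for `ω ≥ 0`, one has `W = 𝔣 ⋆ u` componentwise. -/
theorem internal_wave_convolution {n : Type*} [Fintype n] [DecidableEq n]
    (A : Matrix n n ℝ) (hA : A.IsHermitian) (hpsd : A.PosSemidef)
    (Fhat fh : ℝ → ℝ) (hfh : ∀ ω, 0 ≤ fh ω) (hF : ∀ ω, Fhat ω = fh ω ^ 2)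
    (s : n)
    (W u : ℝ → (n → ℝ))
    (hW : ∀ t, W t = (matCos A hA t).mulVec
      ((matFun A hA fun θ => Fhat (Real.sqrt θ)).mulVec (Pi.single s 1)))
    (hu : ∀ t, u t = (matCos A hA t).mulVec
      ((matFun A hA fun θ => fh (Real.sqrt θ)).mulVec (Pi.single s 1)))
    (𝔣 : ℝ → ℝ) (h𝔣even : ∀ t, 𝔣 (-t) = 𝔣 t) (h𝔣int : Integrable 𝔣)
    (h𝔣hat : ∀ ω : ℝ, 0 ≤ ω → (∫ t', 𝔣 t' * Real.cos (t' * ω)) = fh ω) :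
    ∀ (t : ℝ) (i : n), W t i = ∫ t', 𝔣 (t - t') * u t' i :=
  internal_wave_convolution_general A hA Fhat fh hF s W u hW hu 𝔣 h𝔣even h𝔣int h𝔣hat
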